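/- arXiv:1502.00670 — 5 statements merged into one kernel-verified Lean document; each statement's English description precedes it below -/
import Mathlib

section
/- Let T be a bounded operator on a complex Hilbert space H such that T*^l → 0 in the strong operator topology as l → ∞, and suppose that ∑_{k=0}^{2} (−1)^k (2 choose k) T^k T*^k = I − 2 T T* + T² T*² is a positive operator. Then I − T T* is positive, i.e., T is a contraction. -/
open ContinuousLinearMap Filter

open scoped Topology

/-!
With `aₗ = ‖T*ˡ x‖²`, positivity of `I − 2TT* + T²T*²` at `T*ˡ x` says that the sequence `a` is
convex, and `T*ˡ x → 0` says that it tends to `0`. A convex sequence with a limit is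
nonincreasing, so `0 ≤ a₀ − a₁ = re ⟪(I − TT*) x, x⟫`.
-/

theorem antitone_of_second_diff_nonneg_of_tendsto {a : ℕ → ℝ} {L : ℝ}
    (hconv : ∀ n, 0 ≤ a n - 2 * a (n + 1) + a (n + 2)) (ha : Tendsto a atTop (𝓝 L)) :
    Antitone a := by
  set d : ℕ → ℝ := fun n => a n - a (n + 1)
  have hd_anti : Antitone d := antitone_nat_of_succ_le fun n => by
    simp only [d]
    linarith [hconv n]
  have hd_lim : Tendsto d atTop (𝓝 0) := by
    simpa using ha.sub (ha.comp (tendsto_add_atTop_nat 1))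
  refine antitone_nat_of_succ_le fun n => ?_
  have hd_nonneg := hd_anti.le_of_tendsto hd_lim n
  simp only [d] at hd_nonneg
  linarith

namespace ContinuousLinearMap

variable {𝕜 E : Type*} [RCLike 𝕜] [NormedAddCommGroup E] [InnerProductSpace 𝕜 E]
  [CompleteSpace E]

theorem reApplyInnerSelf_mul_adjoint (A : E →L[𝕜] E) (x : E) :
    (A * adjoint A).reApplyInnerSelf x = ‖adjoint A x‖ ^ 2 := by
  rw [reApplyInnerSelf_apply, mul_apply_eq_comp, ← adjoint_inner_right, inner_self_eq_norm_sq]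

theorem reApplyInnerSelf_one_sub_mul_adjoint (T : E →L[𝕜] E) (x : E) :
    (1 - T * adjoint T).reApplyInnerSelf x = ‖x‖ ^ 2 - ‖adjoint T x‖ ^ 2 := by
  rw [← reApplyInnerSelf_mul_adjoint]
  simp only [reApplyInnerSelf_apply, sub_apply, one_apply_eq_self, inner_sub_left, map_sub,
    inner_self_eq_norm_sq]

theorem reApplyInnerSelf_one_sub_two_mul_adjoint_add_sq (T : E →L[𝕜] E) (x : E) :
    (1 - (2 : 𝕜) • (T * adjoint T) + T ^ 2 * (adjoint T) ^ 2).reApplyInnerSelf x =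
      ‖x‖ ^ 2 - 2 * ‖adjoint T x‖ ^ 2 + ‖((adjoint T) ^ 2) x‖ ^ 2 := by
  have h2 : (adjoint T) ^ 2 = adjoint (T ^ 2) := by simp only [← star_eq_adjoint, star_pow]
  rw [h2, ← reApplyInnerSelf_mul_adjoint T, ← reApplyInnerSelf_mul_adjoint]
  simp [reApplyInnerSelf_apply, inner_sub_left, inner_add_left, inner_smul_left]

end ContinuousLinearMap

/-- If `T*^l → 0` strongly and `I − 2TT* + T²T*² ≥ 0`, then `I − TT* ≥ 0`,
i.e. `T` is a contraction. -/
theorem statement5 {H : Type*} [NormedAddCommGroup H] [InnerProductSpace ℂ H]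
    [CompleteSpace H] (T : H →L[ℂ] H)
    (hC0 : ∀ h : H, Tendsto (fun l : ℕ => ((adjoint T) ^ l) h) atTop (nhds 0))
    (hpos : ((1 : H →L[ℂ] H) - (2 : ℂ) • (T * adjoint T) +
      T ^ 2 * (adjoint T) ^ 2).IsPositive) :
    ((1 : H →L[ℂ] H) - T * adjoint T).IsPositive := by
  refine isPositive_def'.mpr
    ⟨(IsSelfAdjoint.one _).sub (IsSelfAdjoint.mul_star_self T), fun x => ?_⟩
  have hconv : ∀ n, 0 ≤ ‖((adjoint T) ^ n) x‖ ^ 2 - 2 * ‖((adjoint T) ^ (n + 1)) x‖ ^ 2 +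
      ‖((adjoint T) ^ (n + 2)) x‖ ^ 2 := by
    intro n
    have h := hpos.2 (((adjoint T) ^ n) x)
    rw [reApplyInnerSelf_one_sub_two_mul_adjoint_add_sq] at h
    rwa [← mul_apply_eq_comp, ← pow_succ', ← mul_apply_eq_comp, ← pow_add, add_comm 2] at h
  have hlim : Tendsto (fun n => ‖((adjoint T) ^ n) x‖ ^ 2) atTop (𝓝 0) := by
    simpa using ((hC0 x).norm).pow 2
  have hmono := antitone_of_second_diff_nonneg_of_tendsto hconv hlim (Nat.zero_le 1)
  rw [reApplyInnerSelf_one_sub_mul_adjoint]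
  simpa using hmono
end

section
/- Let T be a bounded operator on a complex Hilbert space H with T*^l → 0 strongly, and suppose D² := ∑_{k=0}^{m} (−1)^k (m choose k) T^k T*^k ≥ 0 for some integer m ≥ 1. Then for every h ∈ H, ∑_{k=0}^{∞} (m+k−1 choose k) ⟨T^k D² T*^k h, h⟩ = ‖h‖²; equivalently, ∑_{k=0}^∞ (m+k−1 choose k) ‖D T*^k h‖² = ‖h‖², where D is the positive square root of D². -/
/-!
Write `w p k = re ⟪Δ_p T*^k h, T*^k h⟫`, where `Δ_p = (1 - C)^p 1` with `C X = T X T*`, so that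
`Δ_m = D²`. Then `w (p + 1) k = w p k - w p (k + 1)` and `w 0 k = ‖T*^k h‖² → 0`. Positivity of
`Δ_m` propagates down to every `Δ_p`, `p ≤ m`: once `w (p + 1) ≥ 0`, `w p` is antitone with limit
`0`.

Summation by parts turns `∑ₖ C(p+k, k) w (p+1) k = ‖h‖²` into the same identity for `p + 1`, up to
the nonnegative remainder `ρ_N = C(p+1+N, N) w (p+1) (N+1)`. By monotone convergence `ρ_N` has a
limit, and that limit is `0`: `(N+1)` times the `(N+1)`-st term of the convergent series for `p` is
`(p+1) ρ_N`, and the terms of a convergent series are not of exact order `1/N`.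
-/

open ContinuousLinearMap Filter Finset
open scoped Topology Asymptotics InnerProductSpace

theorem eq_zero_of_summable_of_tendsto_natCast_mul {f : ℕ → ℝ} {l : ℝ} (hf : Summable f)
    (hl : Tendsto (fun n : ℕ => n * f n) atTop (𝓝 l)) : l = 0 := by
  by_contra hl0
  have hequiv : f ~[atTop] fun n : ℕ => l * (n : ℝ)⁻¹ := by
    refine Asymptotics.isEquivalent_of_tendsto_one ?_
    rw [← div_self hl0]
    refine (hl.div_const l).congr' ?_
    filter_upwards [eventually_ne_atTop 0] with n hn
    simp only [Pi.div_apply]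
    field_simp
  have hinv := (hequiv.summable_iff_nat.mp hf).mul_left l⁻¹
  exact Real.not_summable_natCast_inv (by simpa [hl0] using hinv)

theorem sum_range_succ_choose_mul_sub (v : ℕ → ℝ) (p N : ℕ) :
    ∑ k ∈ range (N + 1), ((p + 1 + k).choose k : ℝ) * (v k - v (k + 1)) =
      ∑ k ∈ range (N + 1), ((p + k).choose k : ℝ) * v k -
        ((p + 1 + N).choose N : ℝ) * v (N + 1) := by
  induction N with
  | zero => simp
  | succ N ih =>
    have pascal : ((p + 1 + (N + 1)).choose (N + 1) : ℝ) =
        (p + 1 + N).choose N + (p + (N + 1)).choose (N + 1) := by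
      rw [show p + 1 + (N + 1) = p + 1 + N + 1 by ring, Nat.choose_succ_succ',
        show p + 1 + N = p + (N + 1) by ring]
      push_cast; ring
    rw [sum_range_succ, ih, sum_range_succ _ (N + 1), pascal]
    ring

theorem succ_mul_choose_add_succ (p N : ℕ) :
    ((N + 1 : ℕ) : ℝ) * ((p + (N + 1)).choose (N + 1) : ℝ) =
      (p + 1) * ((p + 1 + N).choose N) := by
  have := Nat.choose_succ_right_eq (p + (N + 1)) N
  rw [show p + (N + 1) - N = p + 1 by omega] at this
  rw [show p + 1 + N = p + (N + 1) by ring]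
  exact_mod_cast (mul_comm _ _).trans (this.trans (mul_comm _ _))

theorem hasSum_choose_mul_sub_succ {v : ℕ → ℝ} {p : ℕ} {s : ℝ} (hv : ∀ k, 0 ≤ v k)
    (hanti : Antitone v) (hs : HasSum (fun k => ((p + k).choose k : ℝ) * v k) s) :
    HasSum (fun k => ((p + 1 + k).choose k : ℝ) * (v k - v (k + 1))) s := by
  set a := fun k => ((p + k).choose k : ℝ) * v k
  set b := fun k => ((p + 1 + k).choose k : ℝ) * (v k - v (k + 1))
  have ha : ∀ k, 0 ≤ a k := fun k => mul_nonneg (Nat.cast_nonneg _) (hv k)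
  have hb : ∀ k, 0 ≤ b k := fun k =>
    mul_nonneg (Nat.cast_nonneg _) (sub_nonneg.2 (hanti k.le_succ))
  set ρ := fun N => ((p + 1 + N).choose N : ℝ) * v (N + 1)
  have hab : ∀ N, ∑ k ∈ range (N + 1), b k = ∑ k ∈ range (N + 1), a k - ρ N :=
    sum_range_succ_choose_mul_sub v p
  obtain ⟨L, hL⟩ : Summable b := summable_of_sum_range_le hb fun N =>
    calc ∑ k ∈ range N, b k ≤ ∑ k ∈ range (N + 1), b k :=
          sum_le_sum_of_subset_of_nonneg (range_mono N.le_succ) fun k _ _ => hb k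
      _ ≤ ∑ k ∈ range (N + 1), a k := by
          rw [hab]; exact sub_le_self _ (mul_nonneg (Nat.cast_nonneg _) (hv _))
      _ ≤ s := sum_le_hasSum _ (fun k _ => ha k) hs
  have hρ : Tendsto ρ atTop (𝓝 (s - L)) := by
    have hlim := (hs.tendsto_sum_nat.sub hL.tendsto_sum_nat).comp (tendsto_add_atTop_nat 1)
    refine hlim.congr fun N => ?_
    simp [hab]
  have hna : Tendsto (fun n : ℕ => n * a n) atTop (𝓝 ((p + 1) * (s - L))) := by
    rw [← tendsto_add_atTop_iff_nat 1]
    refine (hρ.const_mul _).congr fun N => ?_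
    simp only [a, ρ, ← mul_assoc, succ_mul_choose_add_succ]
  have hsL : (p + 1 : ℝ) * (s - L) = 0 :=
    eq_zero_of_summable_of_tendsto_natCast_mul hs.summable hna
  rwa [sub_eq_zero.1 ((mul_eq_zero.1 hsL).resolve_left (by positivity))]

section IteratedDifferences

/- `w p` is the `p`-th backward difference `(1 - S)^p (w 0)` of `w 0`, `S` being the shift. -/
variable {w : ℕ → ℕ → ℝ}

theorem tendsto_iteratedDiff (hw : ∀ p k, w (p + 1) k = w p k - w p (k + 1))
    (h0 : Tendsto (w 0) atTop (𝓝 0)) (p : ℕ) : Tendsto (w p) atTop (𝓝 0) := by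
  induction p with
  | zero => exact h0
  | succ p ih =>
    simpa [funext (hw p)] using ih.sub ((tendsto_add_atTop_iff_nat 1).mpr ih)

theorem antitone_of_iteratedDiff_succ_nonneg (hw : ∀ p k, w (p + 1) k = w p k - w p (k + 1))
    {p : ℕ} (hp : ∀ k, 0 ≤ w (p + 1) k) : Antitone (w p) :=
  antitone_nat_of_succ_le fun k => sub_nonneg.1 (hw p k ▸ hp k)

theorem iteratedDiff_nonneg (hw : ∀ p k, w (p + 1) k = w p k - w p (k + 1))
    (h0 : Tendsto (w 0) atTop (𝓝 0)) {m : ℕ} (hm : ∀ k, 0 ≤ w m k) {p : ℕ} (hp : p ≤ m)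
    (k : ℕ) : 0 ≤ w p k := by
  induction hp using Nat.decreasingInduction generalizing k with
  | self => exact hm k
  | of_succ p _ ih =>
    exact (antitone_of_iteratedDiff_succ_nonneg hw ih).le_of_tendsto
      (tendsto_iteratedDiff hw h0 p) k

theorem hasSum_choose_mul_iteratedDiff (hw : ∀ p k, w (p + 1) k = w p k - w p (k + 1))
    (h0 : Tendsto (w 0) atTop (𝓝 0)) {m : ℕ} (hm : ∀ k, 0 ≤ w m k) :
    HasSum (fun k => ((m + k - 1).choose k : ℝ) * w m k) (w 0 0) := by
  obtain _ | m := m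
  · convert hasSum_ite_eq 0 (w 0 0) with k
    cases k <;> simp
  have key : ∀ p ≤ m, HasSum (fun k => ((p + k).choose k : ℝ) * w (p + 1) k) (w 0 0) := by
    intro p hp
    induction p with
    | zero =>
      simp only [zero_add, Nat.choose_self, Nat.cast_one, one_mul]
      refine (hasSum_iff_tendsto_nat_of_nonneg (iteratedDiff_nonneg hw h0 hm (by omega)) _).2 ?_
      simp only [hw, sum_range_sub']
      simpa using h0.const_sub (w 0 0)
    | succ p ih =>
      rw [funext (hw (p + 1))]
      exact hasSum_choose_mul_sub_succ (iteratedDiff_nonneg hw h0 hm (by omega))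
        (antitone_of_iteratedDiff_succ_nonneg hw (iteratedDiff_nonneg hw h0 hm (by omega)))
        (ih (by omega))
  simpa using key m le_rfl

end IteratedDifferences

namespace ContinuousLinearMap

variable {H : Type*} [NormedAddCommGroup H] [InnerProductSpace ℂ H] [CompleteSpace H]

theorem adjoint_pow (T : H →L[ℂ] H) (k : ℕ) : adjoint (T ^ k) = adjoint T ^ k := by
  simp only [← star_eq_adjoint, star_pow]

theorem inner_mul_mul_adjoint_apply (S X : H →L[ℂ] H) (x : H) :
    ⟪(S * X * adjoint S) x, x⟫_ℂ = ⟪X (adjoint S x), adjoint S x⟫_ℂ :=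
  adjoint_inner_right S _ x ▸ rfl

noncomputable def conjAdjoint (T : H →L[ℂ] H) : (H →L[ℂ] H) →ₗ[ℂ] (H →L[ℂ] H) :=
  LinearMap.mulLeft ℂ T ∘ₗ LinearMap.mulRight ℂ (adjoint T)

theorem conjAdjoint_apply (T X : H →L[ℂ] H) : conjAdjoint T X = T * X * adjoint T := rfl

theorem conjAdjoint_pow_apply_one (T : H →L[ℂ] H) (k : ℕ) :
    (conjAdjoint T ^ k) 1 = T ^ k * adjoint T ^ k := by
  induction k with
  | zero => simp
  | succ k ih =>
    rw [pow_succ', Module.End.mul_apply, ih, conjAdjoint_apply, pow_succ', pow_succ]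
    simp only [mul_assoc]

theorem one_sub_conjAdjoint_pow_apply_one (T : H →L[ℂ] H) (m : ℕ) :
    ((1 - conjAdjoint T) ^ m) 1 =
      ∑ k ∈ range (m + 1), ((-1 : ℂ) ^ k * (m.choose k : ℂ)) • (T ^ k * adjoint T ^ k) := by
  rw [sub_eq_neg_add, (Commute.one_right (-conjAdjoint T)).add_pow, LinearMap.sum_apply]
  refine sum_congr rfl fun k _ => ?_
  rw [one_pow, mul_one, ← neg_one_smul ℂ (conjAdjoint T), smul_pow, smul_mul_assoc,
    LinearMap.smul_apply, Module.End.mul_apply, Module.End.natCast_apply, map_nsmul,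
    conjAdjoint_pow_apply_one, ← Nat.cast_smul_eq_nsmul ℂ, smul_smul]

/- `defectForm T h p k = re ⟪Δ_p T*^k h, T*^k h⟫` for the `p`-th defect operator
`Δ_p = (1 - conjAdjoint T)^p 1 = ∑ⱼ (-1)^j (p choose j) T^j T*^j`. -/
noncomputable def defectForm (T : H →L[ℂ] H) (h : H) (p k : ℕ) : ℝ :=
  RCLike.re ⟪((1 - conjAdjoint T) ^ p) 1 ((adjoint T ^ k) h), (adjoint T ^ k) h⟫_ℂ

theorem defectForm_succ (T : H →L[ℂ] H) (h : H) (p k : ℕ) :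
    defectForm T h (p + 1) k = defectForm T h p k - defectForm T h p (k + 1) := by
  rw [defectForm, pow_succ', Module.End.mul_apply, LinearMap.sub_apply, Module.End.one_apply,
    conjAdjoint_apply, sub_apply, inner_sub_left, inner_mul_mul_adjoint_apply, map_sub,
    ← mul_apply_eq_comp (adjoint T), ← pow_succ']
  rfl

theorem defectForm_zero (T : H →L[ℂ] H) (h : H) (k : ℕ) :
    defectForm T h 0 k = ‖(adjoint T ^ k) h‖ ^ 2 := by
  rw [defectForm, pow_zero, Module.End.one_apply, one_apply_eq_self, inner_self_eq_norm_sq]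

theorem tendsto_defectForm_zero {T : H →L[ℂ] H}
    (hC0 : ∀ h : H, Tendsto (fun l : ℕ => (adjoint T ^ l) h) atTop (𝓝 0)) (h : H) :
    Tendsto (defectForm T h 0) atTop (𝓝 0) := by
  simpa [funext (defectForm_zero T h)] using (hC0 h).norm.pow 2

end ContinuousLinearMap

theorem statement6_general {H : Type*} [NormedAddCommGroup H] [InnerProductSpace ℂ H]
    [CompleteSpace H] (T : H →L[ℂ] H) (m : ℕ)
    (hC0 : ∀ h : H, Tendsto (fun l : ℕ => ((adjoint T) ^ l) h) atTop (nhds 0))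
    (A : H →L[ℂ] H)
    (hA : A = ∑ k ∈ range (m + 1),
      ((-1 : ℂ) ^ k * (m.choose k : ℂ)) • (T ^ k * (adjoint T) ^ k))
    (hApos : A.IsPositive)
    (D : H →L[ℂ] H) (hDpos : D.IsPositive) (hD : D * D = A) :
    ∀ h : H,
      HasSum (fun k : ℕ =>
        (((m + k - 1).choose k : ℝ)) *
          RCLike.re (inner ℂ ((T ^ k * A * (adjoint T) ^ k) h) h : ℂ)) (‖h‖ ^ 2) ∧
      HasSum (fun k : ℕ =>
        (((m + k - 1).choose k : ℝ)) * ‖D (((adjoint T) ^ k) h)‖ ^ 2) (‖h‖ ^ 2) := by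
  intro h
  have hA_form : ∀ k,
      RCLike.re ⟪A ((adjoint T ^ k) h), (adjoint T ^ k) h⟫_ℂ = defectForm T h m k := by
    intro k
    rw [defectForm, one_sub_conjAdjoint_pow_apply_one, hA]
  have hsum := hasSum_choose_mul_iteratedDiff (defectForm_succ T h)
    (tendsto_defectForm_zero hC0 h) fun k => hA_form k ▸ hApos.re_inner_nonneg_left _
  rw [defectForm_zero, pow_zero, one_apply_eq_self] at hsum
  constructor
  · convert hsum using 3 with k
    rw [← hA_form, ← adjoint_pow, inner_mul_mul_adjoint_apply]
  · convert hsum using 3 with k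
    rw [← hA_form, ← hD, apply_norm_sq_eq_inner_adjoint_left, hDpos.isSelfAdjoint.adjoint_eq]
    rfl

/-- If `T*^l → 0` strongly and the defect operator
`D² = ∑_{k=0}^m (−1)^k (m choose k) T^k T*^k` is positive (`m ≥ 1`), then for every
`h ∈ H`, `∑_{k=0}^∞ (m+k−1 choose k) ⟨T^k D² T*^k h, h⟩ = ‖h‖²`; equivalently
`∑_{k=0}^∞ (m+k−1 choose k) ‖D T*^k h‖² = ‖h‖²`, where `D` is the positive square
root of `D²`. -/
theorem statement6 {H : Type*} [NormedAddCommGroup H] [InnerProductSpace ℂ H]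
    [CompleteSpace H] (T : H →L[ℂ] H) (m : ℕ) (hm : 1 ≤ m)
    (hC0 : ∀ h : H, Tendsto (fun l : ℕ => ((adjoint T) ^ l) h) atTop (nhds 0))
    (A : H →L[ℂ] H)
    (hA : A = ∑ k ∈ range (m + 1),
      ((-1 : ℂ) ^ k * (m.choose k : ℂ)) • (T ^ k * (adjoint T) ^ k))
    (hApos : A.IsPositive)
    (D : H →L[ℂ] H) (hDpos : D.IsPositive) (hD : D * D = A) :
    ∀ h : H,
      HasSum (fun k : ℕ =>
        (((m + k - 1).choose k : ℝ)) *
          RCLike.re (inner ℂ ((T ^ k * A * (adjoint T) ^ k) h) h : ℂ)) (‖h‖ ^ 2) ∧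
      HasSum (fun k : ℕ =>
        (((m + k - 1).choose k : ℝ)) * ‖D (((adjoint T) ^ k) h)‖ ^ 2) (‖h‖ ^ 2) :=
  statement6_general T m hC0 A hA hApos D hDpos hD
end

section
/- Let T₁, T₂ be doubly commuting bounded operators on a complex Hilbert space H with positive defect operators A_i = ∑_{k=0}^{m_i} (−1)^k (m_i choose k) T_i^k T_i*^k ≥ 0 (i = 1, 2). Then the joint defect operator ∑_{j=0}^{m₂} ∑_{k=0}^{m₁} (−1)^{j+k} (m₂ choose j)(m₁ choose k) T₂^j T₁^k T₁*^k T₂*^j equals A₁ A₂ = A₂ A₁; in particular it is positive, and its positive square root equals D₁ D₂ where D_i = A_i^{1/2}. -/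
/-!
Since `T₂` and `T₂*` commute with `T₁` and `T₁*`, every summand `T₂^j T₁^k T₁*^k T₂*^j` of the joint
defect operator factors as `(T₁^k T₁*^k)(T₂^j T₂*^j)`, so the double sum is the product `A₁ A₂` of
two commuting operators. A positive square root is a continuous function of its square, so it
commutes with everything its square commutes with; hence `D₁` and `D₂` commute, and the product of
commuting positive operators is positive.
-/

open ContinuousLinearMap Finset

section Defect

variable (𝕜 : Type*) {R : Type*} [CommRing 𝕜] [Ring R] [Algebra 𝕜 R]

/-- With `b = a*` this is the `m`-th defect operator of `a`. -/
def defect (m : ℕ) (a b : R) : R :=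
  ∑ k ∈ range (m + 1), ((-1 : 𝕜) ^ k * (m.choose k : 𝕜)) • (a ^ k * b ^ k)

variable {𝕜} {a b c d : R}

theorem Commute.pow_mul_pow_pow_mul_pow (hac : Commute a c) (had : Commute a d)
    (hbc : Commute b c) (hbd : Commute b d) (k j : ℕ) :
    Commute (a ^ k * b ^ k) (c ^ j * d ^ j) :=
  ((hac.pow_pow k j).mul_right (had.pow_pow k j)).mul_left
    ((hbc.pow_pow k j).mul_right (hbd.pow_pow k j))

theorem Commute.defect_defect (hac : Commute a c) (had : Commute a d)
    (hbc : Commute b c) (hbd : Commute b d) (m n : ℕ) :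
    Commute (defect 𝕜 m a b) (defect 𝕜 n c d) :=
  .sum_left _ _ _ fun k _ => .sum_right _ _ _ fun j _ =>
    ((hac.pow_mul_pow_pow_mul_pow had hbc hbd k j).smul_left _).smul_right _

theorem sum_sum_smul_eq_defect_mul_defect (hac : Commute a c) (hbc : Commute b c) (m n : ℕ) :
    ∑ j ∈ range (n + 1), ∑ k ∈ range (m + 1),
        ((-1 : 𝕜) ^ (j + k) * (n.choose j : 𝕜) * (m.choose k : 𝕜)) • (c ^ j * a ^ k * b ^ k * d ^ j) =
      defect 𝕜 m a b * defect 𝕜 n c d := by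
  rw [defect, defect, sum_mul_sum, sum_comm]
  refine sum_congr rfl fun k _ => sum_congr rfl fun j _ => ?_
  have hcomm : Commute (c ^ j) (a ^ k * b ^ k) :=
    ((hac.pow_pow k j).mul_left (hbc.pow_pow k j)).symm
  rw [mul_assoc (c ^ j), hcomm.eq, mul_assoc (a ^ k * b ^ k), smul_mul_smul_comm]
  congr 1
  ring

end Defect

section SquareRoot

variable {A : Type*} [CStarAlgebra A] [PartialOrder A] [StarOrderedRing A]

theorem Commute.of_mul_self_eq_left {a b d : A} (hd : 0 ≤ d) (hda : d * d = a)
    (h : Commute a b) : Commute d b := by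
  rw [← CFC.sqrt_unique hda hd, CFC.sqrt_eq_cfc]
  exact h.cfc_nnreal _

theorem Commute.of_mul_self_eq {a₁ a₂ d₁ d₂ : A} (hd₁ : 0 ≤ d₁) (hd₂ : 0 ≤ d₂)
    (h₁ : d₁ * d₁ = a₁) (h₂ : d₂ * d₂ = a₂) (h : Commute a₁ a₂) : Commute d₁ d₂ :=
  have had : Commute a₁ d₂ := (h.symm.of_mul_self_eq_left hd₂ h₂).symm
  had.of_mul_self_eq_left hd₁ h₁

end SquareRoot

theorem statement9_general {H : Type*} [NormedAddCommGroup H] [InnerProductSpace ℂ H]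
    [CompleteSpace H] (T₁ T₂ : H →L[ℂ] H)
    (hcomm : T₁ * T₂ = T₂ * T₁) (hdcomm : T₁ * adjoint T₂ = adjoint T₂ * T₁)
    (m₁ m₂ : ℕ)
    (A₁ A₂ : H →L[ℂ] H)
    (hA₁ : A₁ = ∑ k ∈ range (m₁ + 1),
      ((-1 : ℂ) ^ k * (m₁.choose k : ℂ)) • (T₁ ^ k * (adjoint T₁) ^ k))
    (hA₂ : A₂ = ∑ k ∈ range (m₂ + 1),
      ((-1 : ℂ) ^ k * (m₂.choose k : ℂ)) • (T₂ ^ k * (adjoint T₂) ^ k))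
    (hA₁pos : A₁.IsPositive) (hA₂pos : A₂.IsPositive)
    (D₁ D₂ : H →L[ℂ] H)
    (hD₁pos : D₁.IsPositive) (hD₁ : D₁ * D₁ = A₁)
    (hD₂pos : D₂.IsPositive) (hD₂ : D₂ * D₂ = A₂) :
    (∑ j ∈ range (m₂ + 1), ∑ k ∈ range (m₁ + 1),
        ((-1 : ℂ) ^ (j + k) * (m₂.choose j : ℂ) * (m₁.choose k : ℂ)) •
          (T₂ ^ j * T₁ ^ k * (adjoint T₁) ^ k * (adjoint T₂) ^ j)) = A₁ * A₂ ∧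
    A₁ * A₂ = A₂ * A₁ ∧
    (A₁ * A₂).IsPositive ∧
    (D₁ * D₂).IsPositive ∧ (D₁ * D₂) * (D₁ * D₂) = A₁ * A₂ := by
  have h₁₂ : Commute T₁ T₂ := hcomm
  have h₁₂' : Commute T₁ (adjoint T₂) := hdcomm
  have h₁'₂ : Commute (adjoint T₁) T₂ := by
    simpa only [star_eq_adjoint, adjoint_adjoint] using h₁₂'.star_left
  have h₁'₂' : Commute (adjoint T₁) (adjoint T₂) := by
    simpa only [star_eq_adjoint] using h₁₂.star_star
  have hA : Commute A₁ A₂ := by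
    subst hA₁ hA₂
    exact h₁₂.defect_defect h₁₂' h₁'₂ h₁'₂' m₁ m₂
  simp only [← nonneg_iff_isPositive] at hA₁pos hA₂pos hD₁pos hD₂pos ⊢
  have hD : Commute D₁ D₂ := hA.of_mul_self_eq hD₁pos hD₂pos hD₁ hD₂
  refine ⟨?_, hA.eq, hA.mul_nonneg hA₁pos hA₂pos, hD.mul_nonneg hD₁pos hD₂pos, ?_⟩
  · subst hA₁ hA₂
    exact sum_sum_smul_eq_defect_mul_defect h₁₂ h₁'₂ m₁ m₂
  · rw [hD.symm.mul_mul_mul_comm, hD₁, hD₂]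

/-- For doubly commuting `T₁, T₂` with positive defect operators `A₁, A₂`, the joint
defect operator `∑_{j,k} (−1)^{j+k} (m₂ choose j)(m₁ choose k) T₂^j T₁^k T₁*^k T₂*^j`
equals `A₁ A₂ = A₂ A₁`; in particular it is positive and its positive square root is
`D₁ D₂` where `D_i = A_i^{1/2}`. -/
theorem statement9 {H : Type*} [NormedAddCommGroup H] [InnerProductSpace ℂ H]
    [CompleteSpace H] (T₁ T₂ : H →L[ℂ] H)
    (hcomm : T₁ * T₂ = T₂ * T₁) (hdcomm : T₁ * adjoint T₂ = adjoint T₂ * T₁)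
    (m₁ m₂ : ℕ) (hm₁ : 1 ≤ m₁) (hm₂ : 1 ≤ m₂)
    (A₁ A₂ : H →L[ℂ] H)
    (hA₁ : A₁ = ∑ k ∈ range (m₁ + 1),
      ((-1 : ℂ) ^ k * (m₁.choose k : ℂ)) • (T₁ ^ k * (adjoint T₁) ^ k))
    (hA₂ : A₂ = ∑ k ∈ range (m₂ + 1),
      ((-1 : ℂ) ^ k * (m₂.choose k : ℂ)) • (T₂ ^ k * (adjoint T₂) ^ k))
    (hA₁pos : A₁.IsPositive) (hA₂pos : A₂.IsPositive)
    (D₁ D₂ : H →L[ℂ] H)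
    (hD₁pos : D₁.IsPositive) (hD₁ : D₁ * D₁ = A₁)
    (hD₂pos : D₂.IsPositive) (hD₂ : D₂ * D₂ = A₂) :
    (∑ j ∈ range (m₂ + 1), ∑ k ∈ range (m₁ + 1),
        ((-1 : ℂ) ^ (j + k) * (m₂.choose j : ℂ) * (m₁.choose k : ℂ)) •
          (T₂ ^ j * T₁ ^ k * (adjoint T₁) ^ k * (adjoint T₂) ^ j)) = A₁ * A₂ ∧
    A₁ * A₂ = A₂ * A₁ ∧
    (A₁ * A₂).IsPositive ∧
    (D₁ * D₂).IsPositive ∧ (D₁ * D₂) * (D₁ * D₂) = A₁ * A₂ :=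
  statement9_general T₁ T₂ hcomm hdcomm m₁ m₂ A₁ A₂ hA₁ hA₂ hA₁pos hA₂pos D₁ D₂ hD₁pos hD₁ hD₂pos
    hD₂
end

section
/- Let S be the unilateral weighted shift on ℓ²(ℕ) with S e_k = √((k+1)/(k+m)) e_{k+1} for a fixed integer m ≥ 1 (this is the multiplication operator M_z on the weighted Bergman space A²_m). Then ∑_{j=0}^{m} (−1)^j (m choose j) S^j S*^j equals the rank-one orthogonal projection onto the span of e₀. -/
/-!
`S` is multiplication by `z` on a space in which the monomials are orthogonal with
`a_k := ‖z ^ k‖² = 1 / C(n + k, n)` (where `m = n + 1`), so `S ^ j * S* ^ j` is diagonal with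
entry `a_k / a_{k-j}` at `e_k` (and `0` if `j > k`). The diagonal entry at `e_k` of the alternating
sum is therefore `a_k` times the `k`-th coefficient of `(1 - X) ^ m * ∑ C(n + i, n) X ^ i`, which
is the product of `(1 - X) ^ m` with its inverse, hence `1`; so the entry is `δ_{k0}`.
-/

open ContinuousLinearMap Finset

section PowerSeriesIdentity

open PowerSeries

theorem PowerSeries.coeff_one_sub_X_pow (R : Type*) [CommRing R] (m j : ℕ) :
    coeff j ((1 - X : R⟦X⟧) ^ m) = (-1) ^ j * (m.choose j : R) := by
  have hterm (k : ℕ) : (-X : R⟦X⟧) ^ k * 1 ^ (m - k) * (m.choose k : R⟦X⟧) =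
      C ((-1) ^ k * (m.choose k : R)) * X ^ k := by
    rw [neg_pow]
    simp only [one_pow, mul_one, map_mul, map_pow, map_neg, map_one, map_natCast]
    ring
  simp_rw [sub_eq_neg_add, add_pow, hterm, map_sum, coeff_C_mul_X_pow, sum_ite_eq, mem_range]
  split_ifs with h
  · rfl
  · rw [Nat.choose_eq_zero_of_lt (by omega), Nat.cast_zero, mul_zero]

theorem sum_neg_one_pow_mul_choose_mul_add_choose (R : Type*) [CommRing R] (n k : ℕ) :
    ∑ j ∈ range (k + 1), (-1 : R) ^ j * (n + 1).choose j * (n + (k - j)).choose n =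
      if k = 0 then 1 else 0 := by
  have h := congrArg (coeff k) (mk_add_choose_mul_one_sub_pow_eq_one (S := R) n)
  rw [mul_comm, coeff_mul, Nat.sum_antidiagonal_eq_sum_range_succ_mk, coeff_one] at h
  simpa [coeff_one_sub_X_pow] using h

end PowerSeriesIdentity

open scoped lp

section WeightedShift

variable {w : ℕ → ℝ} {S : ℓ²(ℕ, ℂ) →L[ℂ] ℓ²(ℕ, ℂ)}

theorem adjoint_weightedShift_apply
    (hS : ∀ k, S (lp.single 2 k 1) = (w k : ℂ) • lp.single 2 (k + 1) 1)
    (y : ℓ²(ℕ, ℂ)) (j : ℕ) : adjoint S y j = w j * y (j + 1) := by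
  have h := adjoint_inner_right S (lp.single 2 j 1) y
  rw [hS, inner_smul_left, lp.inner_single_left, lp.inner_single_left] at h
  simpa using h

theorem adjoint_weightedShift_single_zero
    (hS : ∀ k, S (lp.single 2 k 1) = (w k : ℂ) • lp.single 2 (k + 1) 1) :
    adjoint S (lp.single 2 0 1) = 0 := by
  ext j
  simp [adjoint_weightedShift_apply hS]

theorem adjoint_weightedShift_single_succ
    (hS : ∀ k, S (lp.single 2 k 1) = (w k : ℂ) • lp.single 2 (k + 1) 1) (k : ℕ) :
    adjoint S (lp.single 2 (k + 1) 1) = (w k : ℂ) • lp.single 2 k 1 := by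
  ext j
  rw [adjoint_weightedShift_apply hS, lp.coeFn_smul, Pi.smul_apply]
  by_cases hj : j = k <;> simp [hj]

theorem weightedShift_pow_single
    (hS : ∀ k, S (lp.single 2 k 1) = (w k : ℂ) • lp.single 2 (k + 1) 1) (j t : ℕ) :
    (S ^ j) (lp.single 2 t 1) =
      ((∏ i ∈ range j, w (t + i) : ℝ) : ℂ) • lp.single 2 (t + j) 1 := by
  induction j with
  | zero => simp
  | succ j ih =>
    rw [pow_succ', mul_apply_eq_comp, ih, map_smul, hS, smul_smul, prod_range_succ, ← add_assoc]
    push_cast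
    ring_nf

theorem adjoint_weightedShift_pow_single_add
    (hS : ∀ k, S (lp.single 2 k 1) = (w k : ℂ) • lp.single 2 (k + 1) 1) (j t : ℕ) :
    (adjoint S ^ j) (lp.single 2 (t + j) 1) =
      ((∏ i ∈ range j, w (t + i) : ℝ) : ℂ) • lp.single 2 t 1 := by
  induction j with
  | zero => simp
  | succ j ih =>
    rw [pow_succ, mul_apply_eq_comp, ← add_assoc, adjoint_weightedShift_single_succ hS, map_smul,
      ih, smul_smul, prod_range_succ]
    push_cast
    ring_nf

theorem adjoint_weightedShift_pow_single_of_lt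
    (hS : ∀ k, S (lp.single 2 k 1) = (w k : ℂ) • lp.single 2 (k + 1) 1)
    {j k : ℕ} (hk : k < j) :
    (adjoint S ^ j) (lp.single 2 k 1) = 0 := by
  induction j generalizing k with
  | zero => omega
  | succ j ih =>
    rw [pow_succ, mul_apply_eq_comp]
    cases k with
    | zero => rw [adjoint_weightedShift_single_zero hS, map_zero]
    | succ k => rw [adjoint_weightedShift_single_succ hS, map_smul, ih (by omega), smul_zero]

theorem prod_range_sq_mul_eq_of_sq_mul_eq {a : ℕ → ℝ} (hw : ∀ k, w k ^ 2 * a k = a (k + 1))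
    (j t : ℕ) : (∏ i ∈ range j, w (t + i)) ^ 2 * a t = a (t + j) := by
  induction j with
  | zero => simp
  | succ j ih => rw [prod_range_succ, mul_pow, mul_right_comm, ih, mul_comm, hw, add_assoc]

theorem weightedShift_pow_mul_adjoint_pow_single
    (hS : ∀ k, S (lp.single 2 k 1) = (w k : ℂ) • lp.single 2 (k + 1) 1)
    {a : ℕ → ℝ} (ha : ∀ k, a k ≠ 0) (hw : ∀ k, w k ^ 2 * a k = a (k + 1)) (j k : ℕ) :
    (S ^ j * adjoint S ^ j) (lp.single 2 k 1) =
      ((if j ≤ k then a k / a (k - j) else 0 : ℝ) : ℂ) • lp.single 2 k 1 := by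
  rw [mul_apply_eq_comp]
  split_ifs with hjk
  · obtain ⟨t, rfl⟩ := Nat.exists_eq_add_of_le' hjk
    rw [adjoint_weightedShift_pow_single_add hS, map_smul, weightedShift_pow_single hS, smul_smul,
      Nat.add_sub_cancel, ← prod_range_sq_mul_eq_of_sq_mul_eq hw j t,
      mul_div_cancel_right₀ _ (ha t)]
    push_cast
    ring_nf
  · rw [adjoint_weightedShift_pow_single_of_lt hS (by omega), map_zero, Complex.ofReal_zero,
      zero_smul]

theorem sum_smul_weightedShift_pow_mul_adjoint_pow_single
    (hS : ∀ k, S (lp.single 2 k 1) = (w k : ℂ) • lp.single 2 (k + 1) 1)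
    {a : ℕ → ℝ} (ha : ∀ k, a k ≠ 0) (hw : ∀ k, w k ^ 2 * a k = a (k + 1))
    (c : ℕ → ℂ) (s : Finset ℕ) (k : ℕ) :
    (∑ j ∈ s, c j • (S ^ j * adjoint S ^ j)) (lp.single 2 k 1) =
      (∑ j ∈ s, c j * ((if j ≤ k then a k / a (k - j) else 0 : ℝ) : ℂ)) •
        lp.single 2 k 1 := by
  simp only [_root_.sum_apply, smul_apply, weightedShift_pow_mul_adjoint_pow_single hS ha hw,
    smul_smul, sum_smul]

end WeightedShift

theorem sum_range_choose_mul_ite_le {R : Type*} [CommSemiring R] (m k : ℕ) (f : ℕ → R) :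
    ∑ j ∈ range (m + 1), m.choose j * (if j ≤ k then f j else 0) =
      ∑ j ∈ range (k + 1), m.choose j * f j := by
  have hm : range (m + 1) ⊆ range (m + k + 1) := range_subset_range.2 (by omega)
  have hk : range (k + 1) ⊆ range (m + k + 1) := range_subset_range.2 (by omega)
  rw [sum_subset hm fun j _ hj => by simp [Nat.choose_eq_zero_of_lt (show m < j by simpa using hj)],
    ← sum_subset hk fun j _ hj => by simp [show ¬ j ≤ k by simpa using hj]]
  exact sum_congr rfl fun j hj => by simp [show j ≤ k by simpa [Nat.lt_succ_iff] using hj]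

/-- `‖z ^ k‖²` in the weighted Bergman space `A²_{n+1}`. -/
noncomputable def bergmanMonomialNormSq (n k : ℕ) : ℝ := ((n + k).choose n : ℝ)⁻¹

theorem bergmanMonomialNormSq_ne_zero (n k : ℕ) : bergmanMonomialNormSq n k ≠ 0 := by
  unfold bergmanMonomialNormSq
  exact inv_ne_zero (Nat.cast_ne_zero.2 (Nat.choose_pos (by omega)).ne')

theorem sqrt_sq_mul_bergmanMonomialNormSq (n k : ℕ) :
    Real.sqrt ((k + 1) / (k + (n + 1 : ℕ))) ^ 2 * bergmanMonomialNormSq n k =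
      bergmanMonomialNormSq n (k + 1) := by
  have h : ((n + k).choose n : ℝ) * (n + k + 1) = (n + k + 1).choose n * (k + 1) := by
    have h := Nat.choose_mul_succ_eq (n + k) n
    rw [show n + k + 1 - n = k + 1 by omega] at h
    exact_mod_cast h
  have h0 : ((n + k).choose n : ℝ) ≠ 0 := Nat.cast_ne_zero.2 (Nat.choose_pos (by omega)).ne'
  have h1 : ((n + k + 1).choose n : ℝ) ≠ 0 := Nat.cast_ne_zero.2 (Nat.choose_pos (by omega)).ne'
  rw [Real.sq_sqrt (by positivity), bergmanMonomialNormSq, bergmanMonomialNormSq, ← add_assoc]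
  field_simp
  push_cast
  linear_combination -h

theorem sum_neg_one_pow_mul_choose_mul_bergman_ratio (n k : ℕ) :
    ∑ j ∈ range (n + 2), (-1 : ℝ) ^ j * (n + 1).choose j *
      (if j ≤ k then bergmanMonomialNormSq n k / bergmanMonomialNormSq n (k - j) else 0) =
        if k = 0 then 1 else 0 := by
  calc _ = ∑ j ∈ range (n + 2), ((n + 1).choose j : ℝ) *
        (if j ≤ k then (-1) ^ j * (n + (k - j)).choose n * bergmanMonomialNormSq n k else 0) := by
        refine sum_congr rfl fun j _ => ?_
        split_ifs
        · rw [bergmanMonomialNormSq, bergmanMonomialNormSq, div_inv_eq_mul]; ring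
        · ring
    _ = (∑ j ∈ range (k + 1), (-1 : ℝ) ^ j * (n + 1).choose j * (n + (k - j)).choose n) *
          bergmanMonomialNormSq n k := by
        rw [sum_range_choose_mul_ite_le, sum_mul]
        exact sum_congr rfl fun j _ => by ring
    _ = if k = 0 then 1 else 0 := by
        rw [sum_neg_one_pow_mul_choose_mul_add_choose]
        split_ifs with hk
        · simp [hk, bergmanMonomialNormSq]
        · rw [zero_mul]

/-- Let `S` be the weighted shift on `ℓ²(ℕ)` with `S e_k = √((k+1)/(k+m)) e_{k+1}`
(the Bergman shift `M_z` on `A²_m`), `m ≥ 1`. Then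
`∑_{j=0}^m (−1)^j (m choose j) S^j S*^j` is the rank-one orthogonal projection onto
the span of `e₀`, i.e. it maps `x` to `⟨e₀, x⟩ e₀`. -/
theorem statement13 (m : ℕ) (hm : 1 ≤ m)
    (S : lp (fun _ : ℕ => ℂ) 2 →L[ℂ] lp (fun _ : ℕ => ℂ) 2)
    (hS : ∀ k : ℕ, S (lp.single 2 k (1 : ℂ)) =
      ((Real.sqrt ((k + 1) / (k + m)) : ℝ) : ℂ) • lp.single 2 (k + 1) (1 : ℂ)) :
    ∀ x : lp (fun _ : ℕ => ℂ) 2,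
      (∑ j ∈ range (m + 1),
          ((-1 : ℂ) ^ j * (m.choose j : ℂ)) • (S ^ j * (adjoint S) ^ j)) x =
        (inner ℂ (lp.single 2 0 (1 : ℂ)) x : ℂ) • lp.single 2 0 (1 : ℂ) := by
  obtain ⟨n, rfl⟩ : ∃ n, m = n + 1 := ⟨m - 1, by omega⟩
  set T := ∑ j ∈ range (n + 1 + 1),
    ((-1 : ℂ) ^ j * ((n + 1).choose j : ℂ)) • (S ^ j * (adjoint S) ^ j) with hT_def
  have hdiag (k : ℕ) :
      T (lp.single 2 k 1) = (if k = 0 then 1 else 0 : ℂ) • lp.single 2 k 1 := by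
    rw [hT_def, sum_smul_weightedShift_pow_mul_adjoint_pow_single hS
      (bergmanMonomialNormSq_ne_zero n) (sqrt_sq_mul_bergmanMonomialNormSq n)]
    congr 1
    have h := congrArg Complex.ofReal (sum_neg_one_pow_mul_choose_mul_bergman_ratio n k)
    push_cast at h ⊢
    rw [h]
    split_ifs <;> simp
  have hT : T = (innerSL ℂ (lp.single 2 0 (1 : ℂ))).smulRight (lp.single 2 0 (1 : ℂ)) :=
    lp.ext_continuousLinearMap ENNReal.ofNat_ne_top fun k => ext_ring <| by
      by_cases hk : k = 0 <;> simp [hdiag, hk, lp.inner_single_left]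
  intro x
  simp [hT]
end

section
/- Let T be a bounded operator on a complex Hilbert space H with T*^l → 0 strongly and with positive defect operator A = ∑_{k=0}^m (−1)^k (m choose k) T^k T*^k, and let D = A^{1/2}. Then the map v : H → ℓ²(ℕ; H) defined by (v h)_k = √(binom(m+k−1,k)) · D T*^k h is a well-defined isometry satisfying v T* = W* v, where W is the operator on ℓ²(ℕ; H) given by (W* x)_k = √((k+1)/(k+m)) x_{k+1} (the H-valued adjoint weighted Bergman shift of weight m). -/
/-!
Fix `h` and put `f n = ‖T*ⁿ h‖²` and `∇f n = f n - f (n + 1)`. Expanding `∇^[s]` binomially,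
`∇^[m] f n = re ⟪A T*ⁿ h, T*ⁿ h⟫ = ‖D T*ⁿ h‖² ≥ 0`. Since `f → 0`, every `∇^[s] f n` is the
telescoping sum `∑ⱼ ∇^[s+1] f (n + j)`; downward induction gives `∇^[s] f ≥ 0` for `s ≤ m`, and
upward induction, regrouping the nonnegative double series along antidiagonals with the
hockey-stick identity `∑_{k ≤ n} C(s+k-1, k) = C(s+n, n)`, gives
`∑ₙ C(s+n-1, n) ∇^[s] f n = f 0 = ‖h‖²`. For `s = m` this is the isometry of `v`; the
intertwining relation is `(k+1) C(m+k, k+1) = (m+k) C(m+k-1, k)`.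
-/

open ContinuousLinearMap Filter Finset

open scoped Topology

lemma sum_range_choose_add_sub_one (s n : ℕ) :
    ∑ k ∈ range (n + 1), (s + k - 1).choose k = (s + n).choose n := by
  induction n with
  | zero => simp
  | succ n ih =>
    rw [sum_range_succ, ih, show s + (n + 1) - 1 = s + n by omega, ← add_assoc,
      Nat.choose_succ_succ, add_comm]

lemma HasSum.sum_range_succ_mul_of_nonneg {c g r : ℕ → ℝ} {L : ℝ} (hc : ∀ k, 0 ≤ c k)
    (hg : ∀ n, 0 ≤ g n) (hrow : ∀ k, HasSum (fun j => g (k + j)) (r k))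
    (hcol : HasSum (fun k => c k * r k) L) :
    HasSum (fun n => (∑ k ∈ range (n + 1), c k) * g n) L := by
  set F : ℕ × ℕ → ℝ := fun p => c p.1 * g (p.1 + p.2)
  have hF_row : ∀ k, HasSum (fun j => F (k, j)) (c k * r k) := fun k => (hrow k).mul_left (c k)
  have hF : HasSum F L := by
    have hsummable : Summable F := by
      refine (summable_prod_of_nonneg fun p => mul_nonneg (hc _) (hg _)).mpr
        ⟨fun k => (hF_row k).summable, ?_⟩
      exact hcol.summable.congr fun k => (hF_row k).tsum_eq.symm
    obtain ⟨a, ha⟩ := hsummable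
    rwa [(ha.prod_fiberwise hF_row).unique hcol] at ha
  refine (HasSum.sigma ((Finset.HasAntidiagonal.sigmaAntidiagonalEquivProd).hasSum_iff.mpr hF)
    fun n => hasSum_fintype _).congr_fun fun n => ?_
  simp only [Function.comp_apply, HasAntidiagonal.sigmaAntidiagonalEquivProd_apply]
  rw [Finset.sum_coe_sort (antidiagonal n) F, sum_mul,
    Finset.Nat.sum_antidiagonal_eq_sum_range_succ_mk]
  refine sum_congr rfl fun k hk => ?_
  simp only [F, Nat.add_sub_cancel' (Nat.lt_succ_iff.mp (mem_range.mp hk))]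

def negFwdDiff (f : ℕ → ℝ) (n : ℕ) : ℝ := f n - f (n + 1)

namespace negFwdDiff

variable {f : ℕ → ℝ}

lemma iterate_eq_smul_fwdDiff (f : ℕ → ℝ) (s : ℕ) :
    negFwdDiff^[s] f = (-1 : ℝ) ^ s • (fwdDiff 1)^[s] f := by
  induction s with
  | zero => simp
  | succ s ih =>
    ext n
    simp only [Function.iterate_succ_apply', ih, negFwdDiff, fwdDiff, Pi.smul_apply, smul_eq_mul]
    ring

lemma iterate_apply_eq_sum (f : ℕ → ℝ) (s n : ℕ) :
    negFwdDiff^[s] f n = ∑ k ∈ range (s + 1), (-1 : ℝ) ^ k * s.choose k * f (n + k) := by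
  rw [iterate_eq_smul_fwdDiff, Pi.smul_apply, fwdDiff_iter_eq_sum_shift, smul_eq_mul, mul_sum]
  refine sum_congr rfl fun k hk => ?_
  obtain ⟨j, rfl⟩ := Nat.exists_eq_add_of_le (Nat.lt_succ_iff.mp (mem_range.mp hk))
  simp only [Nat.add_sub_cancel_left, zsmul_eq_mul, nsmul_one, Int.cast_mul, Int.cast_pow,
    Int.cast_neg, Int.cast_one, Int.cast_natCast, Nat.cast_id, pow_add]
  have hsign : (-1 : ℝ) ^ j * (-1) ^ j = 1 := by rw [← mul_pow]; norm_num
  linear_combination ((-1 : ℝ) ^ k * (k + j).choose k * f (n + k)) * hsign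

lemma tendsto_iterate (hf : Tendsto f atTop (𝓝 0)) (s : ℕ) :
    Tendsto (negFwdDiff^[s] f) atTop (𝓝 0) := by
  induction s with
  | zero => exact hf
  | succ s ih =>
    rw [Function.iterate_succ_apply', ← sub_zero (0 : ℝ)]
    exact ih.sub (ih.comp (tendsto_add_atTop_nat 1))

lemma hasSum_of_nonneg {g : ℕ → ℝ} (hg : Tendsto g atTop (𝓝 0))
    (hpos : ∀ n, 0 ≤ negFwdDiff g n) (n : ℕ) :
    HasSum (fun j => negFwdDiff g (n + j)) (g n) := by
  rw [hasSum_iff_tendsto_nat_of_nonneg (fun j => hpos _)]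
  have hpartial : ∀ N, ∑ j ∈ range N, negFwdDiff g (n + j) = g n - g (n + N) := fun N =>
    Finset.sum_range_sub' (fun j => g (n + j)) N
  have hshift : Tendsto (fun N => n + N) atTop atTop :=
    (tendsto_add_atTop_nat n).congr fun N => add_comm N n
  simpa [hpartial] using tendsto_const_nhds.sub (hg.comp hshift)

lemma iterate_nonneg_of_le (hf : Tendsto f atTop (𝓝 0)) {m : ℕ}
    (hm : ∀ n, 0 ≤ negFwdDiff^[m] f n) {s : ℕ} (hs : s ≤ m) (n : ℕ) :
    0 ≤ negFwdDiff^[s] f n := by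
  induction hs using Nat.decreasingInduction generalizing n with
  | self => exact hm n
  | of_succ s _ ih =>
    have hpos : ∀ n, 0 ≤ negFwdDiff (negFwdDiff^[s] f) n := by
      simpa only [← Function.iterate_succ_apply' negFwdDiff] using ih
    exact (hasSum_of_nonneg (tendsto_iterate hf s) hpos n).nonneg fun j => hpos _

theorem hasSum_choose_mul_iterate (hf : Tendsto f atTop (𝓝 0)) {m : ℕ}
    (hm : ∀ n, 0 ≤ negFwdDiff^[m] f n) :
    HasSum (fun n => ((m + n - 1).choose n : ℝ) * negFwdDiff^[m] f n) (f 0) := by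
  suffices ∀ s ≤ m,
      HasSum (fun n => ((s + n - 1).choose n : ℝ) * negFwdDiff^[s] f n) (f 0) from this m le_rfl
  intro s hs
  induction s with
  | zero =>
    convert hasSum_single 0 fun n hn => ?_ using 1
    · simp
    · simp [Nat.choose_eq_zero_of_lt (show n - 1 < n by omega)]
  | succ s ih =>
    have hpos : ∀ n, 0 ≤ negFwdDiff (negFwdDiff^[s] f) n := by
      simpa only [← Function.iterate_succ_apply' negFwdDiff] using iterate_nonneg_of_le hf hm hs
    have := HasSum.sum_range_succ_mul_of_nonneg (fun k => Nat.cast_nonneg _) hpos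
      (hasSum_of_nonneg (tendsto_iterate hf s) hpos) (ih (by omega))
    convert this using 2 with n
    rw [← Nat.cast_sum, sum_range_choose_add_sub_one, show s + 1 + n - 1 = s + n by omega,
      Function.iterate_succ_apply']

end negFwdDiff

lemma sqrt_div_mul_sqrt_choose {m : ℕ} (hm : 1 ≤ m) (k : ℕ) :
    Real.sqrt ((k + 1) / (k + m)) * Real.sqrt ((m + (k + 1) - 1).choose (k + 1))
      = Real.sqrt ((m + k - 1).choose k) := by
  have hchoose : ((m + (k + 1) - 1).choose (k + 1) : ℝ) * (k + 1)
      = (k + m) * (m + k - 1).choose k := by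
    obtain ⟨n, rfl⟩ := Nat.exists_eq_add_of_le hm
    rw [show 1 + n + (k + 1) - 1 = n + k + 1 by omega, show 1 + n + k - 1 = n + k by omega]
    exact_mod_cast (Nat.add_one_mul_choose_eq (n + k) k).symm.trans (by ring)
  rw [← Real.sqrt_mul (by positivity)]
  congr 1
  field_simp
  linarith

section

variable {ι 𝕜 E F : Type*} [RCLike 𝕜] [NormedAddCommGroup E] [NormedSpace 𝕜 E]
  [NormedAddCommGroup F] [NormedSpace 𝕜 F]

lemma lp.norm_eq_of_hasSum_norm_sq {f : lp (fun _ : ι => F) 2} {a : ℝ} (ha : 0 ≤ a)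
    (hf : HasSum (fun i => ‖f i‖ ^ 2) (a ^ 2)) : ‖f‖ = a := by
  have hnorm := lp.hasSum_norm (p := 2) (by norm_num) f
  simp only [ENNReal.toReal_ofNat, Real.rpow_two] at hnorm
  exact (pow_left_inj₀ (norm_nonneg f) ha two_ne_zero).mp (hnorm.unique hf)

def lp.linearIsometryOfHasSumNormSq (L : ι → E →L[𝕜] F)
    (hL : ∀ x, HasSum (fun i => ‖L i x‖ ^ 2) (‖x‖ ^ 2)) :
    E →ₗᵢ[𝕜] lp (fun _ : ι => F) 2 where
  toFun x := ⟨fun i => L i x, memℓp_gen (by simpa using (hL x).summable)⟩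
  map_add' x y := lp.ext <| funext fun i => map_add (L i) x y
  map_smul' c x := lp.ext <| funext fun i => map_smul (L i) c x
  norm_map' x := lp.norm_eq_of_hasSum_norm_sq (norm_nonneg x) (hL x)

end

section

variable {H : Type*} [NormedAddCommGroup H] [InnerProductSpace ℂ H] [CompleteSpace H]

lemma inner_pow_mul_adjoint_pow_apply (T : H →L[ℂ] H) (k : ℕ) (x : H) :
    inner ℂ x ((T ^ k * adjoint T ^ k) x) = (‖(adjoint T ^ k) x‖ ^ 2 : ℝ) := by
  have hpow : T ^ k = adjoint (adjoint T ^ k) := by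
    rw [← star_eq_adjoint, star_pow, star_eq_adjoint, adjoint_adjoint]
  rw [mul_apply_eq_comp, hpow, adjoint_inner_right, inner_self_eq_norm_sq_to_K, Complex.ofReal_pow]
  rfl

lemma norm_sq_eq_sum_of_mul_self_eq {T D : H →L[ℂ] H} (m : ℕ) (hD : IsSelfAdjoint D)
    (hDD : D * D = ∑ k ∈ range (m + 1),
      ((-1 : ℂ) ^ k * (m.choose k : ℂ)) • (T ^ k * (adjoint T) ^ k)) (x : H) :
    ‖D x‖ ^ 2 =
      ∑ k ∈ range (m + 1), (-1 : ℝ) ^ k * m.choose k * ‖(adjoint T ^ k) x‖ ^ 2 := by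
  have hinner : inner ℂ x ((D * D) x) = (‖D x‖ ^ 2 : ℝ) := by
    rw [mul_apply_eq_comp, ← hD.adjoint_eq, adjoint_inner_right, hD.adjoint_eq,
      inner_self_eq_norm_sq_to_K, Complex.ofReal_pow]
    rfl
  rw [hDD, _root_.sum_apply, inner_sum] at hinner
  simp only [smul_apply, inner_smul_right, inner_pow_mul_adjoint_pow_apply] at hinner
  exact_mod_cast hinner.symm

theorem hasSum_choose_mul_norm_sq_of_mul_self_eq {T D : H →L[ℂ] H} {h : H} (m : ℕ)
    (hC0 : Tendsto (fun l : ℕ => ((adjoint T) ^ l) h) atTop (𝓝 0)) (hD : IsSelfAdjoint D)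
    (hDD : D * D = ∑ k ∈ range (m + 1),
      ((-1 : ℂ) ^ k * (m.choose k : ℂ)) • (T ^ k * (adjoint T) ^ k)) :
    HasSum (fun n => ((m + n - 1).choose n : ℝ) * ‖D ((adjoint T ^ n) h)‖ ^ 2)
      (‖h‖ ^ 2) := by
  set f : ℕ → ℝ := fun n => ‖(adjoint T ^ n) h‖ ^ 2
  have hiter : ∀ n, negFwdDiff^[m] f n = ‖D ((adjoint T ^ n) h)‖ ^ 2 := by
    intro n
    rw [negFwdDiff.iterate_apply_eq_sum, norm_sq_eq_sum_of_mul_self_eq m hD hDD]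
    refine sum_congr rfl fun k _ => ?_
    simp only [f, add_comm n k, pow_add, mul_apply_eq_comp]
  have hf : Tendsto f atTop (𝓝 0) := by simpa [f] using (hC0.norm.pow 2)
  have hsum := negFwdDiff.hasSum_choose_mul_iterate hf (m := m) fun n => hiter n ▸ sq_nonneg _
  simp only [hiter] at hsum
  rwa [show f 0 = ‖h‖ ^ 2 by simp [f]] at hsum

end

theorem statement19_general {H : Type*} [NormedAddCommGroup H] [InnerProductSpace ℂ H]
    [CompleteSpace H] (T : H →L[ℂ] H) (m : ℕ) (hm : 1 ≤ m)
    (hC0 : ∀ h : H, Tendsto (fun l : ℕ => ((adjoint T) ^ l) h) atTop (nhds 0))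
    (A : H →L[ℂ] H)
    (hA : A = ∑ k ∈ range (m + 1),
      ((-1 : ℂ) ^ k * (m.choose k : ℂ)) • (T ^ k * (adjoint T) ^ k))
    (D : H →L[ℂ] H) (hDpos : D.IsPositive) (hD : D * D = A)
    (W : lp (fun _ : ℕ => H) 2 →L[ℂ] lp (fun _ : ℕ => H) 2)
    (hW : ∀ (x : lp (fun _ : ℕ => H) 2) (k : ℕ),
      (adjoint W) x k = ((Real.sqrt ((k + 1) / (k + m)) : ℝ) : ℂ) • x (k + 1)) :
    ∃ v : H →L[ℂ] lp (fun _ : ℕ => H) 2,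
      (∀ (h : H) (k : ℕ),
        v h k = ((Real.sqrt ((m + k - 1).choose k) : ℝ) : ℂ) • D (((adjoint T) ^ k) h)) ∧
      (∀ h : H, ‖v h‖ = ‖h‖) ∧
      v ∘L adjoint T = adjoint W ∘L v := by
  let L : ℕ → H →L[ℂ] H := fun k =>
    ((Real.sqrt ((m + k - 1).choose k) : ℝ) : ℂ) • (D * adjoint T ^ k)
  have hL : ∀ h, HasSum (fun k => ‖L k h‖ ^ 2) (‖h‖ ^ 2) := by
    intro h
    convert hasSum_choose_mul_norm_sq_of_mul_self_eq m (hC0 h) hDpos.isSelfAdjoint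
      (hD.trans hA) using 2 with k
    simp [L, norm_smul, mul_pow]
  let v := lp.linearIsometryOfHasSumNormSq L hL
  refine ⟨v.toContinuousLinearMap, fun h k => rfl, v.norm_map, ?_⟩
  ext h : 1
  refine lp.ext (funext fun k => ?_)
  rw [comp_apply, comp_apply, hW]
  change L k (adjoint T h) = ((Real.sqrt ((k + 1) / (k + m)) : ℝ) : ℂ) • L (k + 1) h
  simp only [L, smul_apply, mul_apply_eq_comp, smul_smul, ← Complex.ofReal_mul,
    sqrt_div_mul_sqrt_choose hm, pow_succ]

/-- Let `T` be of class `C_{·0}` with positive defect operator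
`A = ∑_{k=0}^m (−1)^k (m choose k) T^k T*^k` and `D = A^{1/2}`. Then the map
`v : H → ℓ²(ℕ; H)`, `(v h)_k = √(binom(m+k−1,k)) D T*^k h`, is a well-defined
isometry satisfying `v T* = W* v`, where `W*` is the adjoint weighted Bergman shift
`(W* x)_k = √((k+1)/(k+m)) x_{k+1}` on `ℓ²(ℕ; H)`. -/
theorem statement19 {H : Type*} [NormedAddCommGroup H] [InnerProductSpace ℂ H]
    [CompleteSpace H] (T : H →L[ℂ] H) (m : ℕ) (hm : 1 ≤ m)
    (hC0 : ∀ h : H, Tendsto (fun l : ℕ => ((adjoint T) ^ l) h) atTop (nhds 0))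
    (A : H →L[ℂ] H)
    (hA : A = ∑ k ∈ range (m + 1),
      ((-1 : ℂ) ^ k * (m.choose k : ℂ)) • (T ^ k * (adjoint T) ^ k))
    (hApos : A.IsPositive)
    (D : H →L[ℂ] H) (hDpos : D.IsPositive) (hD : D * D = A)
    (W : lp (fun _ : ℕ => H) 2 →L[ℂ] lp (fun _ : ℕ => H) 2)
    (hW : ∀ (x : lp (fun _ : ℕ => H) 2) (k : ℕ),
      (adjoint W) x k = ((Real.sqrt ((k + 1) / (k + m)) : ℝ) : ℂ) • x (k + 1)) :
    ∃ v : H →L[ℂ] lp (fun _ : ℕ => H) 2,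
      (∀ (h : H) (k : ℕ),
        v h k = ((Real.sqrt ((m + k - 1).choose k) : ℝ) : ℂ) • D (((adjoint T) ^ k) h)) ∧
      (∀ h : H, ‖v h‖ = ‖h‖) ∧
      v ∘L adjoint T = adjoint W ∘L v :=
  statement19_general T m hm hC0 A hA D hDpos hD W hW
end
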